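/- arXiv:1809.11014 — 6 statements merged into one kernel-verified Lean document; each statement's English description precedes it below -/
import Mathlib

section
/- The function h(m) = √(1-m²)·log((1-m)/(1+m)) is strictly convex on (0,1). -/
/-! The second derivative of `√(1 - m²) · log ((1 - m) / (1 + m))` on `(-1, 1)` is
`-log ((1 - m) / (1 + m)) / (1 - m²)^{3/2}`, which is positive for `m ∈ (0, 1)` because
`(1 - m) / (1 + m) < 1` there. -/

open Real Set Filter Topology

section OpenUnitInterval

variable {x : ℝ}

lemma one_sub_sq_pos_of_mem_Ioo (hx : x ∈ Ioo (-1 : ℝ) 1) : 0 < 1 - x ^ 2 := by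
  nlinarith [hx.1, hx.2]

lemma hasDerivAt_sqrt_one_sub_sq (hx : x ∈ Ioo (-1 : ℝ) 1) :
    HasDerivAt (fun m : ℝ => √(1 - m ^ 2)) (-x / √(1 - x ^ 2)) x := by
  have h := ((hasDerivAt_pow 2 x).const_sub 1).sqrt (one_sub_sq_pos_of_mem_Ioo hx).ne'
  convert h using 1
  norm_num
  field_simp

lemma hasDerivAt_log_one_sub_div_one_add (hx : x ∈ Ioo (-1 : ℝ) 1) :
    HasDerivAt (fun m : ℝ => log ((1 - m) / (1 + m))) (-2 / (1 - x ^ 2)) x := by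
  have h1 : 1 - x ≠ 0 := by linarith [hx.2]
  have h2 : 1 + x ≠ 0 := by linarith [hx.1]
  have h3 := (one_sub_sq_pos_of_mem_Ioo hx).ne'
  have h := (((hasDerivAt_id' x).const_sub 1).fun_div ((hasDerivAt_id' x).const_add 1) h2).log
    (div_ne_zero h1 h2)
  convert h using 1
  field_simp
  ring

lemma hasDerivAt_sqrt_one_sub_sq_mul_log (hx : x ∈ Ioo (-1 : ℝ) 1) :
    HasDerivAt (fun m : ℝ => √(1 - m ^ 2) * log ((1 - m) / (1 + m)))
      (-(x * log ((1 - x) / (1 + x)) + 2) / √(1 - x ^ 2)) x := by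
  have hsq : √(1 - x ^ 2) ^ 2 = 1 - x ^ 2 := sq_sqrt (one_sub_sq_pos_of_mem_Ioo hx).le
  have hs : √(1 - x ^ 2) ≠ 0 := (sqrt_pos.2 (one_sub_sq_pos_of_mem_Ioo hx)).ne'
  have h3 := (one_sub_sq_pos_of_mem_Ioo hx).ne'
  refine ((hasDerivAt_sqrt_one_sub_sq hx).mul
    (hasDerivAt_log_one_sub_div_one_add hx)).congr_deriv ?_
  field_simp
  linear_combination -2 * hsq

lemma hasDerivAt_deriv_sqrt_one_sub_sq_mul_log (hx : x ∈ Ioo (-1 : ℝ) 1) :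
    HasDerivAt (fun m : ℝ => -(m * log ((1 - m) / (1 + m)) + 2) / √(1 - m ^ 2))
      (-log ((1 - x) / (1 + x)) / ((1 - x ^ 2) * √(1 - x ^ 2))) x := by
  have hsq : √(1 - x ^ 2) ^ 2 = 1 - x ^ 2 := sq_sqrt (one_sub_sq_pos_of_mem_Ioo hx).le
  have hs : √(1 - x ^ 2) ≠ 0 := (sqrt_pos.2 (one_sub_sq_pos_of_mem_Ioo hx)).ne'
  have h3 := (one_sub_sq_pos_of_mem_Ioo hx).ne'
  have hnum : HasDerivAt (fun m : ℝ => -(m * log ((1 - m) / (1 + m)) + 2))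
      (-(1 * log ((1 - x) / (1 + x)) + x * (-2 / (1 - x ^ 2)))) x :=
    (((hasDerivAt_id' x).mul (hasDerivAt_log_one_sub_div_one_add hx)).add_const 2).neg
  refine (hnum.div (hasDerivAt_sqrt_one_sub_sq hx) hs).congr_deriv ?_
  field_simp
  linear_combination (log ((1 - x) / (1 + x)) * x ^ 2 + 2 * x) * hsq

end OpenUnitInterval

lemma log_one_sub_div_one_add_neg {x : ℝ} (hx : x ∈ Ioo (0 : ℝ) 1) :
    log ((1 - x) / (1 + x)) < 0 :=
  log_neg (div_pos (by linarith [hx.2]) (by linarith [hx.1]))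
    ((div_lt_one (by linarith [hx.1])).2 (by linarith [hx.1]))

/-- The function `h(m) = √(1-m²) · log((1-m)/(1+m))` is strictly convex on `(0,1)`. -/
theorem strictConvexOn_sqrt_log :
    StrictConvexOn ℝ (Set.Ioo (0 : ℝ) 1)
      (fun m : ℝ => Real.sqrt (1 - m ^ 2) * Real.log ((1 - m) / (1 + m))) := by
  have hsub : Ioo (0 : ℝ) 1 ⊆ Ioo (-1) 1 := Ioo_subset_Ioo_left (by norm_num)
  refine strictConvexOn_of_deriv2_pos' (convex_Ioo 0 1)
    (fun x hx => (hasDerivAt_sqrt_one_sub_sq_mul_log (hsub hx)).continuousAt.continuousWithinAt)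
    fun x hx => ?_
  have hderiv : deriv (fun m : ℝ => √(1 - m ^ 2) * log ((1 - m) / (1 + m))) =ᶠ[𝓝 x]
      fun m => -(m * log ((1 - m) / (1 + m)) + 2) / √(1 - m ^ 2) := by
    filter_upwards [Ioo_mem_nhds (show (-1 : ℝ) < x by linarith [hx.1]) hx.2] with m hm
    exact (hasDerivAt_sqrt_one_sub_sq_mul_log hm).deriv
  rw [Function.iterate_succ_apply, Function.iterate_one, hderiv.deriv_eq,
    (hasDerivAt_deriv_sqrt_one_sub_sq_mul_log (hsub hx)).deriv]
  have hpos := one_sub_sq_pos_of_mem_Ioo (hsub hx)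
  exact div_pos (neg_pos.2 (log_one_sub_div_one_add_neg hx)) (by positivity)
end

section
/- For all m ∈ (0,1), 2m + √(1-m²)·log((1-m)/(1+m)) > 0. -/
/-- For all `m ∈ (0,1)`, `2m + √(1-m²) · log((1-m)/(1+m)) > 0`. -/
theorem two_m_add_sqrt_log_pos (m : ℝ) (hm : m ∈ Set.Ioo (0 : ℝ) 1) :
    0 < 2 * m + Real.sqrt (1 - m ^ 2) * Real.log ((1 - m) / (1 + m)) := by
  obtain ⟨hm0, hm1⟩ := hm
  have h1m : (0:ℝ) < 1 - m := by linarith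
  have h1p : (0:ℝ) < 1 + m := by linarith
  have hq : (0:ℝ) < (1 + m) / (1 - m) := by positivity
  set s := Real.sqrt ((1 + m) / (1 - m)) with hs
  have hs0 : 0 < s := Real.sqrt_pos.mpr hq
  set c := Real.sqrt (1 - m ^ 2) with hc
  have hm2 : (0:ℝ) < 1 - m ^ 2 := by nlinarith
  have hc0 : 0 < c := Real.sqrt_pos.mpr hm2
  set t := Real.log s with ht
  -- t > 0
  have hs1 : 1 < s := by
    have hgt : 1 < (1 + m) / (1 - m) := by rw [lt_div_iff₀ h1m]; linarith
    nlinarith [Real.sq_sqrt hq.le, Real.sqrt_nonneg ((1 + m) / (1 - m))]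
  have ht0 : 0 < t := Real.log_pos hs1
  -- c * s = 1 + m
  have hcs : c * s = 1 + m := by
    rw [hc, hs, ← Real.sqrt_mul hm2.le]
    rw [show (1 - m ^ 2) * ((1 + m) / (1 - m)) = (1 + m) ^ 2 by field_simp; ring]
    exact Real.sqrt_sq h1p.le
  -- c * (s - 1/s) = 2 * m
  have hkey : c * (s - s⁻¹) = 2 * m := by
    have hc2 : c ^ 2 = 1 - m ^ 2 := Real.sq_sqrt hm2.le
    have : c * s⁻¹ = (1 - m ^ 2) / (1 + m) := by
      rw [eq_div_iff h1p.ne', ← hcs, ← hc2]; field_simp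
    rw [mul_sub, hcs, this]
    field_simp
    ring
  -- log ((1-m)/(1+m)) = -2t
  have hlog : Real.log ((1 - m) / (1 + m)) = -(2 * t) := by
    have : Real.log ((1 + m) / (1 - m)) = 2 * t := by
      rw [ht, hs, Real.log_sqrt hq.le]; ring
    rw [← inv_div, Real.log_inv, this]
  rw [hlog]
  -- sinh t = (s - s⁻¹)/2 and t < sinh t
  have hsinh : Real.sinh t = (s - s⁻¹) / 2 := by
    rw [Real.sinh_eq, ht, Real.exp_log hs0, ← Real.log_inv, Real.exp_log (by positivity)]
  have hlt : t < Real.sinh t := Real.self_lt_sinh_iff.mpr ht0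
  have : c * t < c * Real.sinh t := by exact (mul_lt_mul_iff_right₀ hc0).mpr hlt
  rw [hsinh] at this
  nlinarith [this, hkey]
end

section
/- Let q > 0 and define β(m) = (2/m)·I'(m) + (2/m)·I'(m)·(1-m)^{(m-1)/(2m)}·(1+m)^{(m+1)/(2m)}·q for m ∈ (0,1), where I'(m) = (1/2)log((1+m)/(1-m)). Then β is strictly monotonically increasing on (0,1), and β(-m) = β(m) for m ∈ (-1,0). -/
/-!
With `s m = artanh m / m` (so that `(2/m) I'(m) = 2 s m`), the power factor equals
`exp (s m) * √(1 - m²)`, hence `β = 2 s + 2 q · s · exp (s + log (1 - m²) / 2)` on `(0,1)`.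
Both summands are strictly increasing there: the numerator of `s'` is `m - (1 - m²) artanh m`,
and the derivative of `s · exp (s + log (1 - m²) / 2)` is a positive multiple of
`m² - (1 - m²) artanh² m`, which is the inequality `4m² + (m²-1)(log(1-m) - log(1+m))² > 0`.
Substituting `m = tanh t` turns `(1 - m²) artanh² m < m²` into `t < sinh t`, and the first
numerator is controlled by the second. Evenness holds for every real `m`, by inspection.
-/

open Real Set

lemma strictMonoOn_Ioo_of_hasDerivAt_pos {a b : ℝ} {f f' : ℝ → ℝ}
    (hf : ∀ x ∈ Ioo a b, HasDerivAt f (f' x) x) (hf' : ∀ x ∈ Ioo a b, 0 < f' x) :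
    StrictMonoOn f (Ioo a b) :=
  strictMonoOn_of_hasDerivWithinAt_pos (convex_Ioo a b)
    (fun x hx => (hf x hx).continuousAt.continuousWithinAt)
    (fun x hx => (hf x (interior_subset hx)).hasDerivWithinAt)
    fun x hx => hf' x (interior_subset hx)

lemma hasDerivAt_artanh {x : ℝ} (hx : x ∈ Ioo (-1) 1) :
    HasDerivAt artanh (1 / (1 - x ^ 2)) x := by
  have h₁ : 1 + x ≠ 0 := by linarith [hx.1]
  have h₂ : 1 - x ≠ 0 := by linarith [hx.2]
  have h₃ : 1 - x ^ 2 ≠ 0 := by nlinarith [hx.1, hx.2]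
  have hlog := ((((hasDerivAt_id' x).const_add 1).log h₁).fun_sub
    (((hasDerivAt_id' x).const_sub 1).log h₂)).div_const 2
  refine (hlog.congr_of_eventuallyEq ?_).congr_deriv ?_
  · filter_upwards [Ioo_mem_nhds hx.1 hx.2] with y hy
    rw [artanh_eq_half_log (Ioo_subset_Icc_self hy),
      log_div (by linarith [hy.1]) (by linarith [hy.2])]
    ring
  · field_simp
    ring

lemma one_sub_sq_mul_artanh_sq_lt {x : ℝ} (hx : x ∈ Ioo 0 1) :
    (1 - x ^ 2) * artanh x ^ 2 < x ^ 2 := by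
  have hc : 0 < 1 - x ^ 2 := by nlinarith [hx.1, hx.2]
  have hsqrt : 0 < √(1 - x ^ 2) := sqrt_pos.2 hc
  have hsinh : artanh x < x / √(1 - x ^ 2) :=
    sinh_artanh ⟨by linarith [hx.1], hx.2⟩ ▸ self_lt_sinh_iff.2 (artanh_pos hx)
  have hlt : √(1 - x ^ 2) * artanh x < x := by
    rwa [lt_div_iff₀ hsqrt, mul_comm] at hsinh
  calc (1 - x ^ 2) * artanh x ^ 2 = (√(1 - x ^ 2) * artanh x) ^ 2 := by
        rw [mul_pow, sq_sqrt hc.le]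
    _ < x ^ 2 := by
        gcongr
        exact mul_nonneg hsqrt.le (artanh_nonneg hx.1.le)

lemma one_sub_sq_mul_artanh_lt {x : ℝ} (hx : x ∈ Ioo 0 1) :
    (1 - x ^ 2) * artanh x < x := by
  have hc : 0 < 1 - x ^ 2 := by nlinarith [hx.1, hx.2]
  nlinarith [one_sub_sq_mul_artanh_sq_lt hx, artanh_pos hx, hx.1]

lemma hasDerivAt_artanh_div {x : ℝ} (hx : x ∈ Ioo (-1) 1) (hx₀ : x ≠ 0) :
    HasDerivAt (fun y => artanh y / y)
      ((x - (1 - x ^ 2) * artanh x) / (x ^ 2 * (1 - x ^ 2))) x := by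
  have hc : 1 - x ^ 2 ≠ 0 := by nlinarith [hx.1, hx.2]
  refine ((hasDerivAt_artanh hx).div (hasDerivAt_id' x) hx₀).congr_deriv ?_
  field_simp

lemma hasDerivAt_artanh_div_mul_exp {x : ℝ} (hx : x ∈ Ioo (-1) 1) (hx₀ : x ≠ 0) :
    HasDerivAt (fun y => artanh y / y * exp (artanh y / y + log (1 - y ^ 2) / 2))
      (exp (artanh x / x + log (1 - x ^ 2) / 2) *
        ((x ^ 2 - (1 - x ^ 2) * artanh x ^ 2) / (x ^ 3 * (1 - x ^ 2)))) x := by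
  have hc : 1 - x ^ 2 ≠ 0 := by nlinarith [hx.1, hx.2]
  have hs := hasDerivAt_artanh_div hx hx₀
  have hlog : HasDerivAt (fun y => log (1 - y ^ 2) / 2) (-(2 * x) / (1 - x ^ 2) / 2) x := by
    simpa using (((hasDerivAt_pow 2 x).const_sub 1).log hc).div_const 2
  refine (hs.fun_mul (hs.fun_add hlog).exp).congr_deriv ?_
  field_simp
  ring

lemma strictMonoOn_artanh_div : StrictMonoOn (fun x => artanh x / x) (Ioo 0 1) :=
  strictMonoOn_Ioo_of_hasDerivAt_pos
    (fun x hx => hasDerivAt_artanh_div ⟨by linarith [hx.1], hx.2⟩ hx.1.ne') fun x hx => by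
      have hc : 0 < 1 - x ^ 2 := by nlinarith [hx.1, hx.2]
      have hx₀ := hx.1
      have := sub_pos.2 (one_sub_sq_mul_artanh_lt hx)
      positivity

lemma strictMonoOn_artanh_div_mul_exp :
    StrictMonoOn (fun x => artanh x / x * exp (artanh x / x + log (1 - x ^ 2) / 2)) (Ioo 0 1) :=
  strictMonoOn_Ioo_of_hasDerivAt_pos
    (fun x hx => hasDerivAt_artanh_div_mul_exp ⟨by linarith [hx.1], hx.2⟩ hx.1.ne') fun x hx => by
      have hc : 0 < 1 - x ^ 2 := by nlinarith [hx.1, hx.2]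
      have hx₀ := hx.1
      have := sub_pos.2 (one_sub_sq_mul_artanh_sq_lt hx)
      positivity

lemma one_sub_rpow_mul_one_add_rpow_eq_exp {m : ℝ} (hm : m ∈ Ioo (-1) 1) (hm₀ : m ≠ 0) :
    (1 - m) ^ ((m - 1) / (2 * m)) * (1 + m) ^ ((m + 1) / (2 * m)) =
      exp (artanh m / m + log (1 - m ^ 2) / 2) := by
  have h₁ : 0 < 1 + m := by linarith [hm.1]
  have h₂ : 0 < 1 - m := by linarith [hm.2]
  rw [rpow_def_of_pos h₂, rpow_def_of_pos h₁, ← exp_add,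
    artanh_eq_half_log (Ioo_subset_Icc_self hm), log_div h₁.ne' h₂.ne',
    show 1 - m ^ 2 = (1 - m) * (1 + m) by ring, log_mul h₂.ne' h₁.ne']
  congr 1
  field_simp
  ring

noncomputable def criticalBeta (q m : ℝ) : ℝ :=
  (2 / m) * ((1 / 2) * log ((1 + m) / (1 - m))) +
    (2 / m) * ((1 / 2) * log ((1 + m) / (1 - m))) *
      ((1 - m) ^ ((m - 1) / (2 * m)) * (1 + m) ^ ((m + 1) / (2 * m))) * q

lemma criticalBeta_eq_artanh {q m : ℝ} (hm : m ∈ Ioo (-1) 1) (hm₀ : m ≠ 0) :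
    criticalBeta q m = 2 * (artanh m / m) +
      2 * q * (artanh m / m * exp (artanh m / m + log (1 - m ^ 2) / 2)) := by
  rw [criticalBeta, one_sub_rpow_mul_one_add_rpow_eq_exp hm hm₀,
    ← artanh_eq_half_log (Ioo_subset_Icc_self hm)]
  ring

lemma strictMonoOn_criticalBeta {q : ℝ} (hq : 0 < q) :
    StrictMonoOn (criticalBeta q) (Ioo 0 1) := by
  intro a ha b hb hab
  rw [criticalBeta_eq_artanh ⟨by linarith [ha.1], ha.2⟩ ha.1.ne',
    criticalBeta_eq_artanh ⟨by linarith [hb.1], hb.2⟩ hb.1.ne']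
  gcongr 2 * ?_ + 2 * q * ?_
  · exact strictMonoOn_artanh_div ha hb hab
  · exact strictMonoOn_artanh_div_mul_exp ha hb hab

lemma criticalBeta_neg (q m : ℝ) : criticalBeta q (-m) = criticalBeta q m := by
  have hexp₁ : (-m - 1) / (2 * -m) = (m + 1) / (2 * m) := by
    rw [← neg_div_neg_eq]; ring_nf
  have hexp₂ : (-m + 1) / (2 * -m) = (m - 1) / (2 * m) := by
    rw [← neg_div_neg_eq]; ring_nf
  have hlog : log ((1 - m) / (1 + m)) = -log ((1 + m) / (1 - m)) := by
    rw [← log_inv, inv_div]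
  simp only [criticalBeta, sub_neg_eq_add, ← sub_eq_add_neg, hexp₁, hexp₂, hlog]
  ring

/-- Closed-form parametrization
`β(m) = (2/m) I'(m) + (2/m) I'(m) (1-m)^{(m-1)/(2m)} (1+m)^{(m+1)/(2m)} q`
with `I'(m) = (1/2) log((1+m)/(1-m))` is strictly increasing on `(0,1)` and
even: `β(-m) = β(m)` for `m ∈ (-1,0)`. -/
theorem beta_strictMono_and_even (q : ℝ) (hq : 0 < q) :
    StrictMonoOn
      (fun m : ℝ =>
        (2 / m) * ((1 / 2) * Real.log ((1 + m) / (1 - m))) +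
        (2 / m) * ((1 / 2) * Real.log ((1 + m) / (1 - m))) *
          ((1 - m) ^ ((m - 1) / (2 * m)) * (1 + m) ^ ((m + 1) / (2 * m))) * q)
      (Set.Ioo (0 : ℝ) 1) ∧
    ∀ m ∈ Set.Ioo (-1 : ℝ) 0,
      (fun m : ℝ =>
        (2 / m) * ((1 / 2) * Real.log ((1 + m) / (1 - m))) +
        (2 / m) * ((1 / 2) * Real.log ((1 + m) / (1 - m))) *
          ((1 - m) ^ ((m - 1) / (2 * m)) * (1 + m) ^ ((m + 1) / (2 * m))) * q) (-m)
      = (fun m : ℝ =>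
        (2 / m) * ((1 / 2) * Real.log ((1 + m) / (1 - m))) +
        (2 / m) * ((1 / 2) * Real.log ((1 + m) / (1 - m))) *
          ((1 - m) ^ ((m - 1) / (2 * m)) * (1 + m) ^ ((m + 1) / (2 * m))) * q) m :=
  ⟨strictMonoOn_criticalBeta hq, fun m _ => criticalBeta_neg q m⟩
end

section
/- For q > 0 symmetric a priori measure with α(0)/α(1) = q and any β ≤ 2 + q·e, the unique maximizer of ν ↦ -β·ν(1)·ν(-1) - I(ν|α) over probability measures ν on {-1,0,1} is the unique symmetric solution ν_s of e^{-βν(1)} = q·ν(1)/(1 - 2ν(1)) with ν(1)=ν(-1); for β > 2 + q·e there are exactly two maximizers, which are related by exchanging the weights of +1 and -1. -/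
open Real

/-- Coordinates: `ν = (ν(-1), ν(0), ν(1))`. -/
def WRsimplex : Set (ℝ × ℝ × ℝ) :=
  {ν | 0 ≤ ν.1 ∧ 0 ≤ ν.2.1 ∧ 0 ≤ ν.2.2 ∧ ν.1 + ν.2.1 + ν.2.2 = 1}

/-- Relative entropy of `ν` with respect to the symmetric a priori measure
`α = (a₁, q·a₁, a₁)` (with the convention `0 · log 0 = 0`). -/
noncomputable def WRrelEnt (a₁ q : ℝ) (ν : ℝ × ℝ × ℝ) : ℝ :=
  ν.1 * Real.log (ν.1 / a₁) + ν.2.1 * Real.log (ν.2.1 / (q * a₁)) +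
    ν.2.2 * Real.log (ν.2.2 / a₁)

/-- The free energy functional `ν ↦ -β ν(1) ν(-1) - I(ν|α)`. -/
noncomputable def WRfreeEnergy (β a₁ q : ℝ) (ν : ℝ × ℝ × ℝ) : ℝ :=
  -β * ν.2.2 * ν.1 - WRrelEnt a₁ q ν

/-!
Write `m = ν(-1) - ν(1)` and `s = ν(-1) + ν(1)`, so that the repulsion is
`-β ν(1) ν(-1) = -β/4 (s² - m²)`. Gibbs' inequality against the measure `tilted β (m, s)`,
which splits the mass `s` in the ratio `e^{βm/2} : e^{-βm/2}`, bounds the free energy of `ν` by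
the reduced functional `reducedFreeEnergy (m, s)`, and `tilted β (m, s)` attains this bound up
to `β/4 (s tanh(βm/2) - m)²`. Hence the maximizers of the free energy are the images under
`ofReduced` of the maximizers of the reduced functional on `[-1, 1] × [0, 1]`, which is even
in `m`.

A reduced maximizer has `0 < s < 1` (the entropy has infinite slope at the boundary), solves
`m = s tanh(βm/2)` and is stationary in `s`. For `m > 0` these two equations combine into
`phi β q (βm/2) = 0`, where `phi` is strictly decreasing with limit `log (β - 2) - log q - 1`
at `0⁺`. If `β ≤ 2 + q e` this limit is nonpositive, so `m = 0`, and stationarity at `m = 0`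
is the mean-field equation, whose solution is unique by monotonicity. If `β > 2 + q e`, the
mean-field solution has `β s > 2`; then `s log cosh(βm/2)` beats `β m²/4` for small `m`, so
`m ≠ 0`, and the injectivity of `phi` leaves exactly the pair `(±m, s)`.
-/

open Set Filter Topology

lemma StrictMonoOn.lt_of_tendsto_nhdsGT {f : ℝ → ℝ} {s : Set ℝ} {a x L : ℝ}
    (hf : StrictMonoOn f s) (hs : Ioc a x ⊆ s) (hax : a < x)
    (hL : Tendsto f (𝓝[>] a) (𝓝 L)) : L < f x := by
  have hy : (a + x) / 2 ∈ Ioo a x := ⟨by linarith, by linarith⟩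
  have hfy : ∀ᶠ v in 𝓝[>] a, f v ≤ f ((a + x) / 2) := by
    filter_upwards [Ioo_mem_nhdsGT hy.1] with v hv
    exact (hf (hs ⟨hv.1, hv.2.le.trans hy.2.le⟩) (hs ⟨hy.1, hy.2.le⟩) hv.2).le
  exact (le_of_tendsto hL hfy).trans_lt (hf (hs ⟨hy.1, hy.2.le⟩) (hs ⟨hax, le_rfl⟩) hy.2)

lemma StrictAntiOn.lt_of_tendsto_nhdsGT {f : ℝ → ℝ} {s : Set ℝ} {a x L : ℝ}
    (hf : StrictAntiOn f s) (hs : Ioc a x ⊆ s) (hax : a < x)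
    (hL : Tendsto f (𝓝[>] a) (𝓝 L)) : f x < L := by
  have := StrictMonoOn.lt_of_tendsto_nhdsGT (f := fun v => -f v)
    (fun u hu v hv huv => neg_lt_neg (hf hu hv huv)) hs hax hL.neg
  exact neg_lt_neg_iff.1 this

namespace Real

lemma sub_le_mul_log_sub_mul_log {x b : ℝ} (hx : 0 ≤ x) (hb : 0 < b) :
    x - b ≤ x * log x - x * log b := by
  rcases hx.eq_or_lt with rfl | hx
  · simpa using hb.le
  · have h := mul_le_mul_of_nonneg_left (log_le_sub_one_of_pos (div_pos hb hx)) hx.le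
    rw [log_div hb.ne' hx.ne', mul_sub, mul_sub, mul_div_cancel₀ _ hx.ne'] at h
    linarith

lemma mul_log_div_eq {x c : ℝ} (hc : c ≠ 0) :
    x * log (x / c) = -negMulLog x - x * log c := by
  rcases eq_or_ne x 0 with rfl | hx
  · simp
  · rw [log_div hx hc, negMulLog]
    ring

lemma exists_mul_add_negMulLog_pos (A : ℝ) :
    ∃ t ∈ Ioo (0 : ℝ) 1, 0 < A * t + negMulLog t := by
  have hA : 0 < A - (min A 0 - 1) := by linarith [min_le_left A 0]
  refine ⟨exp (min A 0 - 1),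
    ⟨exp_pos _, exp_lt_one_iff.2 (by linarith [min_le_right A 0])⟩, ?_⟩
  rw [negMulLog, log_exp]
  nlinarith [mul_pos (exp_pos (min A 0 - 1)) hA]

lemma one_add_sq_div_two_le_cosh {u : ℝ} (hu : 0 ≤ u) : 1 + u ^ 2 / 2 ≤ cosh u := by
  have h := cosh_two_mul (u / 2)
  rw [mul_div_cancel₀ _ two_ne_zero, cosh_sq] at h
  nlinarith [self_le_sinh_iff.2 (by positivity : 0 ≤ u / 2)]

lemma mul_sq_div_two_lt_log_cosh {c u : ℝ} (hc : c < 1) (hu : 0 < u) (hu' : u ≤ 1 - c) :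
    c * u ^ 2 / 2 < log (cosh u) := by
  have hcosh := one_add_sq_div_two_le_cosh hu.le
  have hlog := one_sub_inv_le_log_of_pos (cosh_pos u)
  have hinv : (cosh u)⁻¹ ≤ 2 / (2 + u ^ 2) := by
    rw [inv_le_comm₀ (cosh_pos u) (by positivity)]
    linarith [show (2 / (2 + u ^ 2))⁻¹ = 1 + u ^ 2 / 2 by field_simp]
  have hc2 : c * (2 + u ^ 2) < 2 := by
    rcases le_or_gt c 0 with hc0 | hc0
    · nlinarith [sq_nonneg u]
    · nlinarith [mul_le_mul hu' hu' hu.le (by linarith), mul_pos hc0 (by linarith : 0 < 1 - c)]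
  have : c * u ^ 2 / 2 < 1 - 2 / (2 + u ^ 2) := by
    rw [show 1 - 2 / (2 + u ^ 2) = u ^ 2 / (2 + u ^ 2) by field_simp; ring,
      lt_div_iff₀ (by positivity)]
    nlinarith [pow_pos hu 2]
  linarith

lemma tendsto_sinh_div_self : Tendsto (fun u => sinh u / u) (𝓝[>] 0) (𝓝 1) := by
  have h := (hasDerivAt_sinh 0).tendsto_slope_zero_right
  rw [cosh_zero] at h
  refine h.congr fun u => ?_
  simp [div_eq_inv_mul]

end Real

namespace WidomRowlinson

noncomputable def mulCoth (u : ℝ) : ℝ := u * cosh u / sinh u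

lemma hasDerivAt_mulCoth {u : ℝ} (hu : u ≠ 0) :
    HasDerivAt mulCoth ((cosh u * sinh u - u) / sinh u ^ 2) u := by
  have hs : sinh u ≠ 0 := sinh_ne_zero.2 hu
  refine (((hasDerivAt_id' u).mul (hasDerivAt_cosh u)).div (hasDerivAt_sinh u) hs).congr_deriv ?_
  simp only [Pi.mul_apply]
  field_simp
  linear_combination (-u) * cosh_sq u

lemma strictMonoOn_mulCoth : StrictMonoOn mulCoth (Ioi 0) := by
  refine strictMonoOn_of_deriv_pos (convex_Ioi 0)
    (fun u hu => (hasDerivAt_mulCoth (ne_of_gt hu)).continuousAt.continuousWithinAt) ?_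
  intro u hu
  rw [interior_Ioi, mem_Ioi] at hu
  rw [(hasDerivAt_mulCoth (ne_of_gt hu)).deriv]
  have hsinh : u < sinh u := self_lt_sinh_iff.2 hu
  have hcosh : 0 ≤ (cosh u - 1) * sinh u :=
    mul_nonneg (sub_nonneg.2 (one_le_cosh u)) (hu.trans hsinh).le
  exact div_pos (by nlinarith) (pow_pos (hu.trans hsinh) 2)

lemma tendsto_mulCoth : Tendsto mulCoth (𝓝[>] 0) (𝓝 1) := by
  have h := (continuous_cosh.tendsto 0).mono_left nhdsWithin_le_nhds |>.div
    tendsto_sinh_div_self one_ne_zero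
  rw [cosh_zero, div_one] at h
  refine h.congr fun u => ?_
  simp only [Pi.div_apply, mulCoth, div_div_eq_mul_div, mul_comm]

lemma one_lt_mulCoth {u : ℝ} (hu : 0 < u) : 1 < mulCoth u :=
  strictMonoOn_mulCoth.lt_of_tendsto_nhdsGT (fun _ hv => hv.1) hu tendsto_mulCoth

def criticalDomain (β : ℝ) : Set ℝ := {u | 0 < u ∧ 2 * mulCoth u < β}

noncomputable def phi (β q u : ℝ) : ℝ :=
  log (sinh u) - log u - mulCoth u + log (β - 2 * mulCoth u) - log q

lemma strictAntiOn_log_sinh_sub_log_sub_mulCoth :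
    StrictAntiOn (fun u => log (sinh u) - log u - mulCoth u) (Ioi 0) := by
  have hderiv : ∀ u ∈ Ioi (0 : ℝ), HasDerivAt (fun u => log (sinh u) - log u - mulCoth u)
      (u / sinh u ^ 2 - u⁻¹) u := by
    intro u hu
    have hs : sinh u ≠ 0 := (sinh_pos_iff.2 hu).ne'
    have hu0 : u ≠ 0 := ne_of_gt hu
    refine ((((hasDerivAt_sinh u).log hs).sub (hasDerivAt_log hu0)).sub
      (hasDerivAt_mulCoth hu0)).congr_deriv ?_
    field_simp
    ring
  refine strictAntiOn_of_deriv_neg (convex_Ioi 0)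
    (fun u hu => (hderiv u hu).continuousAt.continuousWithinAt) ?_
  intro u hu
  rw [interior_Ioi, mem_Ioi] at hu
  rw [(hderiv u hu).deriv, sub_neg, div_lt_iff₀ (pow_pos (sinh_pos_iff.2 hu) 2),
    inv_mul_eq_div, lt_div_iff₀ hu]
  nlinarith [self_lt_sinh_iff.2 hu]

lemma strictAntiOn_phi (β q : ℝ) : StrictAntiOn (phi β q) (criticalDomain β) := by
  intro u hu v hv huv
  have h1 := strictAntiOn_log_sinh_sub_log_sub_mulCoth hu.1 hv.1 huv
  have h2 := strictMonoOn_mulCoth hu.1 hv.1 huv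
  have h3 : log (β - 2 * mulCoth v) < log (β - 2 * mulCoth u) :=
    log_lt_log (by linarith [hv.2]) (by linarith)
  simp only [phi] at h1 ⊢
  linarith

lemma tendsto_phi {β : ℝ} (q : ℝ) (hβ : β ≠ 2) :
    Tendsto (phi β q) (𝓝[>] 0) (𝓝 (log (β - 2) - log q - 1)) := by
  have h := (((tendsto_sinh_div_self.log one_ne_zero).sub tendsto_mulCoth).add
    ((tendsto_mulCoth.const_mul 2).const_sub β |>.log (by rwa [mul_one, sub_ne_zero]))).sub_const
    (log q)
  rw [log_one, mul_one] at h
  refine (h.congr' ?_).trans (le_of_eq (by ring_nf))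
  filter_upwards [self_mem_nhdsWithin] with u hu
  rw [phi, log_div (sinh_pos_iff.2 hu).ne' (ne_of_gt hu)]

lemma phi_lt {β q u : ℝ} (hu : u ∈ criticalDomain β) :
    phi β q u < log (β - 2) - log q - 1 := by
  have hβ : 2 < β := by linarith [one_lt_mulCoth hu.1, hu.2]
  refine (strictAntiOn_phi β q).lt_of_tendsto_nhdsGT (fun v hv => ⟨hv.1, ?_⟩) hu.1
    (tendsto_phi q hβ.ne')
  rcases hv.2.eq_or_lt with rfl | hvu
  · exact hu.2
  · linarith [strictMonoOn_mulCoth hv.1 hu.1 hvu, hu.2]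

lemma phi_neg {β q u : ℝ} (hq : 0 < q) (hβq : β ≤ 2 + q * exp 1)
    (hu : u ∈ criticalDomain β) : phi β q u < 0 := by
  have hβ : 2 < β := by linarith [one_lt_mulCoth hu.1, hu.2]
  have h := log_le_log (by linarith) (by linarith : β - 2 ≤ q * exp 1)
  rw [log_mul hq.ne' (exp_pos 1).ne', log_exp] at h
  linarith [phi_lt (q := q) hu]

variable {β q a : ℝ}

lemma freeEnergy_eq (hq : 0 < q) (ha : 0 < a) {ν : ℝ × ℝ × ℝ}
    (hν : ν.1 + ν.2.1 + ν.2.2 = 1) :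
    WRfreeEnergy β a q ν = -β * ν.2.2 * ν.1 + negMulLog ν.1 + negMulLog ν.2.2 +
      negMulLog (1 - (ν.1 + ν.2.2)) + (ν.1 + ν.2.2) * log a +
      (1 - (ν.1 + ν.2.2)) * log (q * a) := by
  rw [WRfreeEnergy, WRrelEnt, mul_log_div_eq ha.ne', mul_log_div_eq (mul_pos hq ha).ne',
    mul_log_div_eq ha.ne', show ν.2.1 = 1 - (ν.1 + ν.2.2) by linarith]
  ring

def reducedDomain : Set (ℝ × ℝ) := Icc (-1) 1 ×ˢ Icc 0 1

def toReduced (ν : ℝ × ℝ × ℝ) : ℝ × ℝ := (ν.1 - ν.2.2, ν.1 + ν.2.2)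

noncomputable def ofReduced (p : ℝ × ℝ) : ℝ × ℝ × ℝ :=
  ((p.2 + p.1) / 2, 1 - p.2, (p.2 - p.1) / 2)

noncomputable def reducedFreeEnergy (β q a : ℝ) (p : ℝ × ℝ) : ℝ :=
  -(β / 4) * p.2 ^ 2 - (β / 4) * p.1 ^ 2 + p.2 * log (2 * cosh (β * p.1 / 2)) +
    negMulLog p.2 + negMulLog (1 - p.2) + p.2 * log a + (1 - p.2) * log (q * a)

noncomputable def tilted (β : ℝ) (p : ℝ × ℝ) : ℝ × ℝ × ℝ :=
  (p.2 * exp (β * p.1 / 2) / (2 * cosh (β * p.1 / 2)), 1 - p.2,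
    p.2 * exp (-(β * p.1 / 2)) / (2 * cosh (β * p.1 / 2)))

lemma tilted_fst_add_snd_snd (β : ℝ) (p : ℝ × ℝ) :
    (tilted β p).1 + (tilted β p).2.2 = p.2 := by
  have hc := cosh_pos (β * p.1 / 2)
  simp only [tilted]
  field_simp
  linear_combination (-2 * p.2) * cosh_eq (β * p.1 / 2)

lemma tilted_fst_sub_snd_snd (β : ℝ) (p : ℝ × ℝ) :
    (tilted β p).1 - (tilted β p).2.2 = p.2 * tanh (β * p.1 / 2) := by
  have hc := cosh_pos (β * p.1 / 2)
  simp only [tilted, tanh_eq_sinh_div_cosh]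
  field_simp
  linear_combination (-2 * p.2) * sinh_eq (β * p.1 / 2)

lemma tilted_mem {p : ℝ × ℝ} (hp : p ∈ reducedDomain) : tilted β p ∈ WRsimplex := by
  obtain ⟨-, hs0, hs1⟩ := hp
  have hc := cosh_pos (β * p.1 / 2)
  refine ⟨by simp only [tilted]; positivity, by simp only [tilted]; linarith,
    by simp only [tilted]; positivity, ?_⟩
  linarith [tilted_fst_add_snd_snd β p, show (tilted β p).2.1 = 1 - p.2 from rfl]

lemma log_tilted_fst {p : ℝ × ℝ} (hs : 0 < p.2) :
    log (tilted β p).1 = log p.2 + β * p.1 / 2 - log (2 * cosh (β * p.1 / 2)) := by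
  rw [tilted, log_div (by positivity) (by positivity), log_mul hs.ne' (exp_pos _).ne', log_exp]

lemma log_tilted_snd_snd {p : ℝ × ℝ} (hs : 0 < p.2) :
    log (tilted β p).2.2 = log p.2 - β * p.1 / 2 - log (2 * cosh (β * p.1 / 2)) := by
  rw [tilted, log_div (by positivity) (by positivity), log_mul hs.ne' (exp_pos _).ne', log_exp]
  ring

lemma negMulLog_tilted {p : ℝ × ℝ} (hs : 0 ≤ p.2) :
    negMulLog (tilted β p).1 + negMulLog (tilted β p).2.2 =
      negMulLog p.2 + p.2 * log (2 * cosh (β * p.1 / 2)) -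
        β * p.1 / 2 * ((tilted β p).1 - (tilted β p).2.2) := by
  rcases hs.eq_or_lt with hs | hs
  · simp [tilted, ← hs]
  · simp only [negMulLog, log_tilted_fst hs, log_tilted_snd_snd hs]
    linear_combination (-log p.2 + log (2 * cosh (β * p.1 / 2))) * tilted_fst_add_snd_snd β p

lemma freeEnergy_le_reducedFreeEnergy (hq : 0 < q) (ha : 0 < a) {ν : ℝ × ℝ × ℝ}
    (hν : ν ∈ WRsimplex) :
    WRfreeEnergy β a q ν ≤ reducedFreeEnergy β q a (toReduced ν) := by
  obtain ⟨hx, -, hz, hsum⟩ := hν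
  rw [freeEnergy_eq hq ha hsum]
  simp only [reducedFreeEnergy, toReduced]
  suffices h : negMulLog ν.1 + negMulLog ν.2.2 + β / 2 * (ν.1 - ν.2.2) ^ 2 ≤
      negMulLog (ν.1 + ν.2.2) + (ν.1 + ν.2.2) * log (2 * cosh (β * (ν.1 - ν.2.2) / 2)) by
    nlinarith
  set p : ℝ × ℝ := (ν.1 - ν.2.2, ν.1 + ν.2.2)
  rcases (add_nonneg hx hz).eq_or_lt with hs | hs
  · have hx0 : ν.1 = 0 := by linarith
    have hz0 : ν.2.2 = 0 := by linarith
    simp [hx0, hz0]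
  · have hX : 0 < (tilted β p).1 := by simp only [tilted]; positivity
    have hZ : 0 < (tilted β p).2.2 := by simp only [tilted]; positivity
    have hgibbs :=
      add_le_add (sub_le_mul_log_sub_mul_log hx hX) (sub_le_mul_log_sub_mul_log hz hZ)
    rw [log_tilted_fst (p := p) hs, log_tilted_snd_snd (p := p) hs] at hgibbs
    simp only [negMulLog]
    nlinarith [tilted_fst_add_snd_snd β p]

lemma reducedFreeEnergy_eq_freeEnergy_tilted_sub (hq : 0 < q) (ha : 0 < a) {p : ℝ × ℝ}
    (hs : 0 ≤ p.2) : reducedFreeEnergy β q a p =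
      WRfreeEnergy β a q (tilted β p) - β / 4 * (p.2 * tanh (β * p.1 / 2) - p.1) ^ 2 := by
  have hadd := tilted_fst_add_snd_snd β p
  have hsub := tilted_fst_sub_snd_snd β p
  rw [freeEnergy_eq hq ha (by simp only [tilted] at hadd ⊢; linarith), reducedFreeEnergy,
    add_assoc (-β * _ * _), negMulLog_tilted hs, hadd, hsub]
  have hprod : 4 * ((tilted β p).2.2 * (tilted β p).1) =
      p.2 ^ 2 - (p.2 * tanh (β * p.1 / 2)) ^ 2 := by
    rw [← hsub, ← hadd]
    ring
  linear_combination (β / 4) * hprod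

lemma toReduced_mem {ν : ℝ × ℝ × ℝ} (hν : ν ∈ WRsimplex) :
    toReduced ν ∈ reducedDomain := by
  obtain ⟨hx, hy, hz, hsum⟩ := hν
  refine ⟨⟨?_, ?_⟩, ?_, ?_⟩ <;> simp only [toReduced] <;> linarith

lemma ofReduced_toReduced {ν : ℝ × ℝ × ℝ} (hν : ν ∈ WRsimplex) :
    ofReduced (toReduced ν) = ν := by
  obtain ⟨-, -, -, hsum⟩ := hν
  ext <;> simp only [ofReduced, toReduced] <;> linarith

lemma continuous_reducedFreeEnergy : Continuous (reducedFreeEnergy β q a) := by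
  unfold reducedFreeEnergy
  fun_prop (disch := intro; positivity)

def reducedMaximizers (β q a : ℝ) : Set (ℝ × ℝ) :=
  {p ∈ reducedDomain | IsMaxOn (reducedFreeEnergy β q a) reducedDomain p}

lemma reducedMaximizers_nonempty (β q a : ℝ) : (reducedMaximizers β q a).Nonempty :=
  (isCompact_Icc.prod isCompact_Icc).exists_isMaxOn ⟨(0, 0), by norm_num [reducedDomain]⟩
    continuous_reducedFreeEnergy.continuousOn

lemma toReduced_mem_reducedMaximizers (hq : 0 < q) (ha : 0 < a) (hβ : 0 ≤ β)
    {ν : ℝ × ℝ × ℝ} (hν : ν ∈ WRsimplex)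
    (hmax : IsMaxOn (WRfreeEnergy β a q) WRsimplex ν) :
    toReduced ν ∈ reducedMaximizers β q a := by
  refine ⟨toReduced_mem hν, fun p hp => ?_⟩
  have h := reducedFreeEnergy_eq_freeEnergy_tilted_sub (β := β) hq ha hp.2.1
  have hdefect : 0 ≤ β / 4 * (p.2 * tanh (β * p.1 / 2) - p.1) ^ 2 := by positivity
  calc reducedFreeEnergy β q a p ≤ WRfreeEnergy β a q (tilted β p) := by linarith
    _ ≤ WRfreeEnergy β a q ν := hmax (tilted_mem hp)
    _ ≤ reducedFreeEnergy β q a (toReduced ν) := freeEnergy_le_reducedFreeEnergy hq ha hν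

lemma snd_mul_tanh_eq_fst (hq : 0 < q) (ha : 0 < a) (hβ : 0 < β) {p : ℝ × ℝ}
    (hp : p ∈ reducedMaximizers β q a) : p.2 * tanh (β * p.1 / 2) = p.1 := by
  have h := reducedFreeEnergy_eq_freeEnergy_tilted_sub (β := β) hq ha hp.1.2.1
  have hle := (freeEnergy_le_reducedFreeEnergy hq ha (tilted_mem (β := β) hp.1)).trans
    (hp.2 (toReduced_mem (tilted_mem hp.1)))
  have hsq : (p.2 * tanh (β * p.1 / 2) - p.1) ^ 2 = 0 :=
    le_antisymm (by nlinarith) (sq_nonneg _)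
  linarith [pow_eq_zero_iff two_ne_zero |>.1 hsq]

lemma tilted_eq_ofReduced {p : ℝ × ℝ} (h : p.2 * tanh (β * p.1 / 2) = p.1) :
    tilted β p = ofReduced p := by
  have hadd := tilted_fst_add_snd_snd β p
  have hsub := tilted_fst_sub_snd_snd β p
  ext
  · simp only [ofReduced]; linarith
  · rfl
  · simp only [ofReduced]; linarith

lemma ofReduced_mem_and_isMaxOn (hq : 0 < q) (ha : 0 < a) (hβ : 0 < β) {p : ℝ × ℝ}
    (hp : p ∈ reducedMaximizers β q a) :
    ofReduced p ∈ WRsimplex ∧ IsMaxOn (WRfreeEnergy β a q) WRsimplex (ofReduced p) := by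
  have hcons := snd_mul_tanh_eq_fst hq ha hβ hp
  have h := reducedFreeEnergy_eq_freeEnergy_tilted_sub (β := β) hq ha hp.1.2.1
  rw [hcons, sub_self, zero_pow two_ne_zero, mul_zero, sub_zero, tilted_eq_ofReduced hcons] at h
  refine ⟨tilted_eq_ofReduced hcons ▸ tilted_mem hp.1, fun ν hν => ?_⟩
  rw [Set.mem_ofPred_eq, ← h]
  exact (freeEnergy_le_reducedFreeEnergy hq ha hν).trans (hp.2 (toReduced_mem hν))

lemma reducedFreeEnergy_neg_fst (p : ℝ × ℝ) :
    reducedFreeEnergy β q a (-p.1, p.2) = reducedFreeEnergy β q a p := by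
  simp only [reducedFreeEnergy, mul_neg, neg_div, cosh_neg, neg_sq]

lemma neg_fst_mem_reducedMaximizers {p : ℝ × ℝ} (hp : p ∈ reducedMaximizers β q a) :
    (-p.1, p.2) ∈ reducedMaximizers β q a := by
  obtain ⟨⟨⟨hm1, hm2⟩, hs⟩, hmax⟩ := hp
  refine ⟨⟨⟨by linarith, by linarith⟩, hs⟩, fun p' hp' => ?_⟩
  rw [Set.mem_ofPred_eq, reducedFreeEnergy_neg_fst]
  exact hmax hp'

lemma snd_pos_of_mem_reducedMaximizers (hβ : 0 ≤ β) {p : ℝ × ℝ}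
    (hp : p ∈ reducedMaximizers β q a) : 0 < p.2 := by
  obtain ⟨⟨hm, hs0, -⟩, hmax⟩ := hp
  refine hs0.lt_of_ne fun hs => ?_
  obtain ⟨t, ⟨ht0, ht1⟩, ht⟩ :=
    exists_mul_add_negMulLog_pos (-(β / 4) + log a - log (q * a))
  have hle := hmax (show (p.1, t) ∈ reducedDomain from ⟨hm, ht0.le, ht1.le⟩)
  have hL : 0 ≤ log (2 * cosh (β * p.1 / 2)) :=
    log_nonneg (by linarith [one_le_cosh (β * p.1 / 2)])
  have h1t := negMulLog_nonneg (by linarith : 0 ≤ 1 - t) (by linarith)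
  simp only [Set.mem_ofPred_eq, reducedFreeEnergy, ← hs] at hle
  norm_num at hle
  nlinarith [mul_nonneg hβ (mul_nonneg ht0.le (sub_nonneg.2 ht1.le)), mul_nonneg ht0.le hL]

lemma snd_lt_one_of_mem_reducedMaximizers (hβ : 0 ≤ β) {p : ℝ × ℝ}
    (hp : p ∈ reducedMaximizers β q a) : p.2 < 1 := by
  obtain ⟨⟨hm, -, hs1⟩, hmax⟩ := hp
  refine hs1.lt_of_ne fun hs => ?_
  obtain ⟨t, ⟨ht0, ht1⟩, ht⟩ :=
    exists_mul_add_negMulLog_pos (-log (2 * cosh (β * p.1 / 2)) - log a + log (q * a))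
  have hle := hmax (show (p.1, 1 - t) ∈ reducedDomain from ⟨hm, by linarith, by linarith⟩)
  have h1t := negMulLog_nonneg (by linarith : 0 ≤ 1 - t) (by linarith)
  simp only [Set.mem_ofPred_eq, reducedFreeEnergy, hs, sub_sub_cancel] at hle
  norm_num at hle
  nlinarith [mul_nonneg hβ (mul_nonneg ht0.le (by linarith : (0 : ℝ) ≤ 2 - t))]

lemma hasDerivAt_reducedFreeEnergy_snd (m : ℝ) {s : ℝ} (hs0 : 0 < s) (hs1 : s < 1) :
    HasDerivAt (fun t => reducedFreeEnergy β q a (m, t))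
      (-(β / 2) * s + log (2 * cosh (β * m / 2)) - log s + log (1 - s) + log a - log (q * a))
      s := by
  have h1s : HasDerivAt (fun t : ℝ => 1 - t) (-1) s := (hasDerivAt_id' s).const_sub 1
  refine ((((((((hasDerivAt_pow 2 s).const_mul (-(β / 4))).sub_const ((β / 4) * m ^ 2)).add
    ((hasDerivAt_id' s).mul_const (log (2 * cosh (β * m / 2))))).add
    (hasDerivAt_negMulLog hs0.ne')).add
    ((hasDerivAt_negMulLog (by linarith : 1 - s ≠ 0)).comp s h1s)).add
    ((hasDerivAt_id' s).mul_const (log a))).add (h1s.mul_const (log (q * a)))).congr_deriv ?_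
  push_cast
  ring

lemma stationary_of_mem_reducedMaximizers (hq : 0 < q) (ha : 0 < a) (hβ : 0 ≤ β)
    {p : ℝ × ℝ} (hp : p ∈ reducedMaximizers β q a) :
    log (2 * cosh (β * p.1 / 2)) + log (1 - p.2) - log p.2 - log q = β / 2 * p.2 := by
  have hs0 := snd_pos_of_mem_reducedMaximizers hβ hp
  have hs1 := snd_lt_one_of_mem_reducedMaximizers hβ hp
  have hloc : IsLocalMax (fun t => reducedFreeEnergy β q a (p.1, t)) p.2 := by
    filter_upwards [Ioo_mem_nhds hs0 hs1] with t ht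
    exact hp.2 ⟨hp.1.1, ht.1.le, ht.2.le⟩
  have h := hloc.hasDerivAt_eq_zero (hasDerivAt_reducedFreeEnergy_snd p.1 hs0 hs1)
  rw [log_mul hq.ne' ha.ne'] at h
  linarith

lemma meanField_of_mem_reducedMaximizers (hq : 0 < q) (ha : 0 < a) (hβ : 0 ≤ β)
    {p : ℝ × ℝ} (hp : p ∈ reducedMaximizers β q a) (hm : p.1 = 0) :
    exp (-β * (p.2 / 2)) = q * (p.2 / 2) / (1 - 2 * (p.2 / 2)) := by
  have hs0 := snd_pos_of_mem_reducedMaximizers hβ hp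
  have hs1 := snd_lt_one_of_mem_reducedMaximizers hβ hp
  have h := stationary_of_mem_reducedMaximizers hq ha hβ hp
  rw [hm, mul_zero, zero_div, cosh_zero, mul_one] at h
  have hlog : log (q * (p.2 / 2) / (1 - 2 * (p.2 / 2))) = -β * (p.2 / 2) := by
    rw [log_div (by positivity) (by linarith), log_mul hq.ne' (by positivity),
      log_div hs0.ne' two_ne_zero, show 1 - 2 * (p.2 / 2) = 1 - p.2 by ring]
    linarith
  rw [← hlog, exp_log (div_pos (by positivity) (by linarith))]

lemma one_lt_mul_of_meanField (hβq : 2 + q * exp 1 < β) {z : ℝ} (hz : 0 ≤ z)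
    (hz1 : 2 * z < 1) (h : exp (-β * z) = q * z / (1 - 2 * z)) : 1 < β * z := by
  by_contra! hle
  have h1 : exp (-1) ≤ q * z / (1 - 2 * z) := h ▸ exp_le_exp.2 (by linarith)
  rw [le_div_iff₀ (by linarith)] at h1
  have h2 := mul_le_mul_of_nonneg_left h1 (exp_pos 1).le
  rw [← mul_assoc, ← exp_add, add_neg_cancel, exp_zero, one_mul] at h2
  rcases hz.eq_or_lt with rfl | hz0
  · linarith
  · nlinarith [mul_lt_mul_of_pos_left hβq hz0]

lemma fst_ne_zero_of_lt (hq : 0 < q) (ha : 0 < a) (hβ : 0 < β) (hβq : 2 + q * exp 1 < β)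
    {p : ℝ × ℝ} (hp : p ∈ reducedMaximizers β q a) : p.1 ≠ 0 := by
  intro hm
  have hs0 := snd_pos_of_mem_reducedMaximizers hβ.le hp
  have hs1 := snd_lt_one_of_mem_reducedMaximizers hβ.le hp
  have hβs := one_lt_mul_of_meanField hβq (by positivity) (by linarith)
    (meanField_of_mem_reducedMaximizers hq ha hβ.le hp hm)
  set c := 2 / (β * p.2)
  have hc : c < 1 := by rw [div_lt_one (by positivity)]; linarith
  set m := min 1 (2 * (1 - c) / β)
  have hm0 : 0 < m := lt_min one_pos (div_pos (by linarith) hβ)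
  have hu : β * m / 2 ≤ 1 - c := by
    have := mul_le_mul_of_nonneg_left (min_le_right 1 (2 * (1 - c) / β)) hβ.le
    rw [mul_div_cancel₀ _ hβ.ne'] at this
    linarith
  have hgain := mul_lt_mul_of_pos_left (mul_sq_div_two_lt_log_cosh hc (by positivity) hu) hs0
  have hle :=
    hp.2 (show (m, p.2) ∈ reducedDomain from ⟨⟨by linarith, min_le_left _ _⟩, hp.1.2⟩)
  have hc' : p.2 * (c * (β * m / 2) ^ 2 / 2) = β / 4 * m ^ 2 := by
    simp only [c]; field_simp; ring
  simp only [Set.mem_ofPred_eq, reducedFreeEnergy, hm, mul_zero, zero_div, cosh_zero, mul_one,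
    log_mul two_ne_zero (cosh_pos (β * m / 2)).ne'] at hle
  nlinarith

lemma phi_eq_zero_of_fst_pos (hq : 0 < q) (ha : 0 < a) (hβ : 0 < β) {p : ℝ × ℝ}
    (hp : p ∈ reducedMaximizers β q a) (hm : 0 < p.1) :
    β * p.1 / 2 ∈ criticalDomain β ∧ phi β q (β * p.1 / 2) = 0 ∧
      2 * mulCoth (β * p.1 / 2) = β * p.2 := by
  have hs0 := snd_pos_of_mem_reducedMaximizers hβ.le hp
  have hs1 := snd_lt_one_of_mem_reducedMaximizers hβ.le hp
  have hstat := stationary_of_mem_reducedMaximizers hq ha hβ.le hp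
  have hcons := snd_mul_tanh_eq_fst hq ha hβ hp
  set u := β * p.1 / 2
  have hu : 0 < u := by positivity
  have hsinh := sinh_pos_iff.2 hu
  have hc := cosh_pos u
  have hkey : β * p.2 * sinh u = 2 * cosh u * u := by
    rw [tanh_eq_sinh_div_cosh, mul_div_assoc', div_eq_iff hc.ne'] at hcons
    simp only [u] at hcons ⊢
    linear_combination β * hcons
  have hT : 2 * mulCoth u = β * p.2 := by
    rw [mulCoth, mul_div_assoc', div_eq_iff hsinh.ne']
    linear_combination -hkey
  have hlog := congrArg log hkey
  rw [log_mul (by positivity) hsinh.ne', log_mul hβ.ne' hs0.ne', log_mul (by positivity) hu.ne',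
    log_mul two_ne_zero hc.ne'] at hlog
  have hphi : phi β q u =
      log (sinh u) - log u - β / 2 * p.2 + log β + log (1 - p.2) - log q := by
    rw [phi, show mulCoth u = β / 2 * p.2 by linarith,
      show β - 2 * (β / 2 * p.2) = β * (1 - p.2) by ring, log_mul hβ.ne' (by linarith)]
    ring
  rw [log_mul two_ne_zero hc.ne'] at hstat
  exact ⟨⟨hu, by nlinarith⟩, by linarith, hT⟩

lemma fst_eq_zero_of_le (hq : 0 < q) (ha : 0 < a) (hβ : 0 < β) (hβq : β ≤ 2 + q * exp 1)
    {p : ℝ × ℝ} (hp : p ∈ reducedMaximizers β q a) : p.1 = 0 := by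
  have hnotpos : ∀ p' ∈ reducedMaximizers β q a, ¬ 0 < p'.1 := fun p' hp' hm => by
    obtain ⟨hU, hphi, -⟩ := phi_eq_zero_of_fst_pos hq ha hβ hp' hm
    exact (phi_neg hq hβq hU).ne hphi
  rcases lt_trichotomy p.1 0 with h | h | h
  · exact absurd (neg_pos.2 h) (hnotpos _ (neg_fst_mem_reducedMaximizers hp))
  · exact h
  · exact absurd h (hnotpos p hp)

lemma eq_of_fst_pos (hq : 0 < q) (ha : 0 < a) (hβ : 0 < β) {p p' : ℝ × ℝ}
    (hp : p ∈ reducedMaximizers β q a) (hp' : p' ∈ reducedMaximizers β q a)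
    (hm : 0 < p.1) (hm' : 0 < p'.1) : p = p' := by
  obtain ⟨hU, hphi, hT⟩ := phi_eq_zero_of_fst_pos hq ha hβ hp hm
  obtain ⟨hU', hphi', hT'⟩ := phi_eq_zero_of_fst_pos hq ha hβ hp' hm'
  have hu := (strictAntiOn_phi β q).injOn hU hU' (hphi.trans hphi'.symm)
  rw [hu, hT'] at hT
  exact Prod.ext (mul_left_cancel₀ hβ.ne' (by linarith)) (mul_left_cancel₀ hβ.ne' hT.symm)

lemma reducedMaximizers_eq_pair (hq : 0 < q) (ha : 0 < a) (hβ : 0 < β)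
    (hβq : 2 + q * exp 1 < β) {p : ℝ × ℝ} (hp : p ∈ reducedMaximizers β q a)
    (hm : 0 < p.1) : reducedMaximizers β q a = {p, (-p.1, p.2)} := by
  ext p'
  refine ⟨fun hp' => ?_, ?_⟩
  · rcases (fst_ne_zero_of_lt hq ha hβ hβq hp').lt_or_gt with h | h
    · right
      rw [eq_of_fst_pos hq ha hβ hp (neg_fst_mem_reducedMaximizers hp') hm (neg_pos.2 h), neg_neg]
      rfl
    · exact Or.inl (eq_of_fst_pos hq ha hβ hp hp' hm h).symm
  · rintro (rfl | rfl)
    exacts [hp, neg_fst_mem_reducedMaximizers hp]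

lemma maximizers_eq_image_ofReduced (hq : 0 < q) (ha : 0 < a) (hβ : 0 < β) :
    {ν ∈ WRsimplex | IsMaxOn (WRfreeEnergy β a q) WRsimplex ν} =
      ofReduced '' reducedMaximizers β q a := by
  ext ν
  refine ⟨fun ⟨hν, hmax⟩ => ?_, ?_⟩
  · exact ⟨toReduced ν, toReduced_mem_reducedMaximizers hq ha hβ.le hν hmax,
      ofReduced_toReduced hν⟩
  · rintro ⟨p, hp, rfl⟩
    exact ofReduced_mem_and_isMaxOn hq ha hβ hp

lemma eq_of_meanField (hβ : 0 ≤ β) (hq : 0 < q) {z w : ℝ} (hz : 0 ≤ z) (hz1 : 2 * z < 1)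
    (hw : 0 ≤ w) (hw1 : 2 * w < 1) (hmz : exp (-β * z) = q * z / (1 - 2 * z))
    (hmw : exp (-β * w) = q * w / (1 - 2 * w)) : z = w := by
  have key : ∀ x y, 0 ≤ x → 2 * y < 1 → x < y → exp (-β * x) = q * x / (1 - 2 * x) →
      exp (-β * y) = q * y / (1 - 2 * y) → False := by
    intro x y hx hy hxy hmx hmy
    have h1 : exp (-β * y) ≤ exp (-β * x) := exp_le_exp.2 (by nlinarith)
    have h2 : q * x / (1 - 2 * x) < q * y / (1 - 2 * y) := by
      rw [div_lt_div_iff₀ (by linarith) (by linarith)]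
      nlinarith [mul_lt_mul_of_pos_left hxy hq]
    linarith
  rcases lt_trichotomy z w with h | h | h
  exacts [(key z w hz hw1 h hmz hmw).elim, h, (key w z hw hz1 h hmw hmz).elim]

lemma two_mul_lt_one_of_meanField {ν : ℝ × ℝ × ℝ} (hν : ν ∈ WRsimplex)
    (hsym : ν.1 = ν.2.2)
    (hmf : exp (-β * ν.2.2) = q * ν.2.2 / (1 - 2 * ν.2.2)) : 2 * ν.2.2 < 1 := by
  obtain ⟨-, hy, -, hsum⟩ := hν
  refine (show 2 * ν.2.2 ≤ 1 by linarith).lt_of_ne fun h => ?_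
  rw [h, sub_self, div_zero] at hmf
  exact (exp_pos _).ne' hmf

lemma eq_of_symmetric_meanField (hβ : 0 ≤ β) (hq : 0 < q) {ν ν' : ℝ × ℝ × ℝ}
    (hν : ν ∈ WRsimplex) (hsym : ν.1 = ν.2.2)
    (hmf : exp (-β * ν.2.2) = q * ν.2.2 / (1 - 2 * ν.2.2))
    (hν' : ν' ∈ WRsimplex) (hsym' : ν'.1 = ν'.2.2)
    (hmf' : exp (-β * ν'.2.2) = q * ν'.2.2 / (1 - 2 * ν'.2.2)) : ν = ν' := by
  have hz := eq_of_meanField hβ hq hν.2.2.1 (two_mul_lt_one_of_meanField hν hsym hmf)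
    hν'.2.2.1 (two_mul_lt_one_of_meanField hν' hsym' hmf') hmf hmf'
  exact Prod.ext (by linarith) (Prod.ext (by linarith [hν.2.2.2, hν'.2.2.2]) hz)

end WidomRowlinson

open WidomRowlinson

theorem WR_second_order_phase_transition_general (q a₁ β : ℝ) (hq : 0 < q) (ha₁ : 0 < a₁)
    (hβ : 0 < β) :
    (β ≤ 2 + q * Real.exp 1 →
      ∃! ν : ℝ × ℝ × ℝ,
        ν ∈ WRsimplex ∧ IsMaxOn (WRfreeEnergy β a₁ q) WRsimplex ν ∧
          ν.1 = ν.2.2 ∧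
          Real.exp (-β * ν.2.2) = q * ν.2.2 / (1 - 2 * ν.2.2)) ∧
    (2 + q * Real.exp 1 < β →
      ∃ ν₁ ν₂ : ℝ × ℝ × ℝ, ν₁ ≠ ν₂ ∧
        ν₂ = (ν₁.2.2, ν₁.2.1, ν₁.1) ∧
        {ν ∈ WRsimplex | IsMaxOn (WRfreeEnergy β a₁ q) WRsimplex ν} = {ν₁, ν₂}) := by
  obtain ⟨p, hp⟩ := reducedMaximizers_nonempty β q a₁
  refine ⟨fun hβq => ?_, fun hβq => ?_⟩
  · have hm := fst_eq_zero_of_le hq ha₁ hβ hβq hp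
    obtain ⟨hmem, hmax⟩ := ofReduced_mem_and_isMaxOn hq ha₁ hβ hp
    have hsym : (ofReduced p).1 = (ofReduced p).2.2 := by simp [ofReduced, hm]
    have hmf : exp (-β * (ofReduced p).2.2) =
        q * (ofReduced p).2.2 / (1 - 2 * (ofReduced p).2.2) := by
      simpa [ofReduced, hm] using meanField_of_mem_reducedMaximizers hq ha₁ hβ.le hp hm
    exact ⟨ofReduced p, ⟨hmem, hmax, hsym, hmf⟩, fun ν hν =>
      eq_of_symmetric_meanField hβ.le hq hν.1 hν.2.2.1 hν.2.2.2 hmem hsym hmf⟩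
  · obtain ⟨p, hp, hm⟩ : ∃ p ∈ reducedMaximizers β q a₁, 0 < p.1 := by
      rcases (fst_ne_zero_of_lt hq ha₁ hβ hβq hp).lt_or_gt with h | h
      exacts [⟨_, neg_fst_mem_reducedMaximizers hp, neg_pos.2 h⟩, ⟨p, hp, h⟩]
    refine ⟨ofReduced p, ofReduced (-p.1, p.2), fun h => ?_, ?_, ?_⟩
    · have h1 := congrArg Prod.fst h
      simp only [ofReduced] at h1
      linarith
    · simp only [ofReduced]
      ring_nf
    · rw [maximizers_eq_image_ofReduced hq ha₁ hβ,
        reducedMaximizers_eq_pair hq ha₁ hβ hβq hp hm, Set.image_pair]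

/-- Second order phase transition of the symmetric Curie-Weiss Widom-Rowlinson model:
for `β ≤ 2 + q e` the unique maximizer of `ν ↦ -β ν(1)ν(-1) - I(ν|α)` on the simplex
is the unique symmetric solution of the mean-field equation; for `β > 2 + q e` there
are exactly two maximizers, related by exchanging the weights of `+1` and `-1`. -/
theorem WR_second_order_phase_transition (q a₁ β : ℝ) (hq : 0 < q) (ha₁ : 0 < a₁)
    (hnorm : 2 * a₁ + q * a₁ = 1) (hβ : 0 < β) :
    (β ≤ 2 + q * Real.exp 1 →
      ∃! ν : ℝ × ℝ × ℝ,
        ν ∈ WRsimplex ∧ IsMaxOn (WRfreeEnergy β a₁ q) WRsimplex ν ∧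
          ν.1 = ν.2.2 ∧
          Real.exp (-β * ν.2.2) = q * ν.2.2 / (1 - 2 * ν.2.2)) ∧
    (2 + q * Real.exp 1 < β →
      ∃ ν₁ ν₂ : ℝ × ℝ × ℝ, ν₁ ≠ ν₂ ∧
        ν₂ = (ν₁.2.2, ν₁.2.1, ν₁.1) ∧
        {ν ∈ WRsimplex | IsMaxOn (WRfreeEnergy β a₁ q) WRsimplex ν} = {ν₁, ν₂}) :=
  WR_second_order_phase_transition_general q a₁ β hq ha₁ hβ
end

section
/- Let α be symmetric with q = α(0)/α(1) > 0, β_c = 2 + q·e, and let ν_s be the unique symmetric solution of e^{-βν(1)} = qν(1)/(1-2ν(1)). If β > β_c then ν_s(1) > 1/β. -/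
/-- Above the critical repulsion `β_c = 2 + q e`, the symmetric solution `ν_s`
of `e^{-β x} = q x/(1-2x)` satisfies `ν_s(1) > 1/β`. -/
theorem symmetric_solution_gt_inv_beta (q β x : ℝ) (hq : 0 < q)
    (hβ : 2 + q * Real.exp 1 < β) (hx : x ∈ Set.Ioo (0 : ℝ) (1/2))
    (hfix : Real.exp (-β * x) = q * x / (1 - 2 * x)) :
    1 / β < x := by
  obtain ⟨hx0, hx2⟩ := hx
  have hE : (0:ℝ) < Real.exp 1 := Real.exp_pos 1
  have hβ0 : (0:ℝ) < β := by nlinarith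
  by_contra h
  push_neg at h
  rw [le_div_iff₀ hβ0] at h
  have he : Real.exp (-1) ≤ Real.exp (-β * x) :=
    Real.exp_le_exp.mpr (by nlinarith)
  rw [hfix] at he
  have h12 : (0:ℝ) < 1 - 2 * x := by linarith
  have h2 := (le_div_iff₀ h12).mp he
  rw [Real.exp_neg] at h2
  have h3 : 1 - 2 * x ≤ q * x * Real.exp 1 := by
    have hc : (Real.exp 1)⁻¹ * Real.exp 1 = 1 := inv_mul_cancel₀ hE.ne'
    nlinarith [mul_le_mul_of_nonneg_left h2 hE.le]
  nlinarith
end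

section
/- At β = β_c = 2 + q·e, the symmetric solution of e^{-β x} = q x/(1-2x) is x = 1/(q·e + 2), and the Hessian matrix A = -[[1/x + 1/(1-2x), β + 1/(1-2x)],[β + 1/(1-2x), 1/x + 1/(1-2x)]] evaluated at this x has a zero eigenvalue. -/
/-!
With `c = q e`, the choice `x = 1 / (c + 2)` gives `β x = 1` and `x / (1 - 2x) = 1 / c`, which is
the fixed-point equation. Since `β = 1 / x`, the Hessian has the form `-[[a, b], [b, a]]` with
`a = b`, so `(1, -1)` lies in its kernel.
-/

open Matrix

theorem of_swap_mulVec_one_neg_one {R : Type*} [CommRing R] (a b : R) :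
    of ![![a, b], ![b, a]] *ᵥ ![1, -1] = (a - b) • ![1, -1] := by
  ext i
  fin_cases i <;> simp [mulVec, dotProduct, Fin.sum_univ_two, sub_eq_add_neg]

theorem one_div_add_two_div_one_sub_two_mul {K : Type*} [Field K] {c : K} (hc : c + 2 ≠ 0) :
    1 / (c + 2) / (1 - 2 * (1 / (c + 2))) = 1 / c := by
  have h : 1 - 2 * (1 / (c + 2)) = c / (c + 2) := by field_simp; ring
  rw [h, div_div_div_cancel_right₀ hc]

theorem add_two_mul_one_div_add_two {K : Type*} [Field K] {c : K} (hc : c + 2 ≠ 0) :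
    (2 + c) * (1 / (c + 2)) = 1 := by
  rw [add_comm, mul_one_div_cancel hc]

/-- At `β = β_c = 2 + q e`, the symmetric solution of `e^{-βx} = qx/(1-2x)` is
`x = 1/(q e + 2)`, and the Hessian matrix evaluated there has a zero eigenvalue. -/
theorem hessian_zero_eigenvalue_at_critical (q : ℝ) (hq : 0 < q) :
    let β := 2 + q * Real.exp 1
    let x : ℝ := 1 / (q * Real.exp 1 + 2)
    Real.exp (-β * x) = q * x / (1 - 2 * x) ∧
    ∃ v : Fin 2 → ℝ, v ≠ 0 ∧
      Matrix.mulVec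
        (-(Matrix.of ![![1 / x + 1 / (1 - 2 * x), β + 1 / (1 - 2 * x)],
                       ![β + 1 / (1 - 2 * x), 1 / x + 1 / (1 - 2 * x)]])) v = 0 := by
  dsimp only
  set c := q * Real.exp 1
  have hβx : (2 + c) * (1 / (c + 2)) = 1 := add_two_mul_one_div_add_two (by positivity)
  constructor
  · rw [neg_mul, hβx, mul_div_assoc, one_div_add_two_div_one_sub_two_mul (by positivity),
      Real.exp_neg, mul_one_div, div_mul_cancel_left₀ hq.ne']
  · refine ⟨![1, -1], fun h => by simpa using congrFun h 0, ?_⟩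
    rw [neg_mulVec, of_swap_mulVec_one_neg_one, ← eq_one_div_of_mul_eq_one_left hβx,
      add_sub_add_right_eq_sub, sub_self, zero_smul, neg_zero]
end
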